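/- arXiv:2010.09667 — 7 statements merged into one kernel-verified Lean document; each statement's English description precedes it below -/
import Mathlib

section
/- If a point x' lies in the open cone from x to the open disk B(y,l) (the region bounded by the two tangent segments from x to the circle C(y,l) together with the disk), then the distance from x' to y is strictly less than the distance from x to y. -/
noncomputable section

/-- The open cone from `x` to the open disk `B(y,l)`: the region bounded by the
two tangent segments from `x` to the circle `C(y,l)` together with the disk,
i.e. the union of all segments from `x` to points of the open disk, with the
apex `x` removed. -/
def Cone (x y : EuclideanSpace ℝ (Fin 2)) (l : ℝ) : Set (EuclideanSpace ℝ (Fin 2)) :=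
  {z | z ≠ x ∧ ∃ w, dist w y < l ∧ z ∈ segment ℝ x w}

/-- Every point of `Cone(x, B(y,l))` is strictly closer to `y` than `x` is. -/
theorem cone_dist_lt (x y x' : EuclideanSpace ℝ (Fin 2)) (l : ℝ)
    (hl : 0 < l) (hd : l < dist x y) (hx' : x' ∈ Cone x y l) :
    dist x' y < dist x y := by
  obtain ⟨hne, w, hw, a, b, ha, hb, hab, heq⟩ := hx'
  rcases eq_or_lt_of_le hb with hb0 | hb0
  · exfalso; apply hne
    have ha1 : a = 1 := by linarith
    rw [← heq, ← hb0, ha1]; simp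
  · have key : dist x' y ≤ a * dist x y + b * dist w y := by
      have : x' - y = a • (x - y) + b • (w - y) := by
        have hy : a • y + b • y = y := by rw [← add_smul, hab, one_smul]
        rw [← heq]
        conv_lhs => rw [← hy]
        module
      rw [dist_eq_norm, dist_eq_norm, dist_eq_norm, this]
      calc ‖a • (x - y) + b • (w - y)‖ ≤ ‖a • (x - y)‖ + ‖b • (w - y)‖ :=
            norm_add_le _ _
        _ = a * ‖x - y‖ + b * ‖w - y‖ := by
            rw [norm_smul, norm_smul, Real.norm_of_nonneg ha,
              Real.norm_of_nonneg hb]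
    have : dist w y < dist x y := hw.trans hd
    nlinarith [dist_nonneg (x := x) (y := y)]
end
end

section
/- If x' lies in Cone(x, B(y,l)) but outside the closed disk of radius l around y, then Cone(x', B(y,l)) is contained in Cone(x, B(y,l)). -/
/-!
Write `J(x, B)` for the union of the segments from `x` to points of the disk `B`, so that
`Cone(x, B) = J(x, B) \ {x}`. Joins are associative and `J(B, B) = B` by convexity, so
`x' ∈ J(x, B)` gives `J(x', B) ⊆ J(J(x, B), B) = J(x, J(B, B)) = J(x, B)`. The apex `x` itself
is not in `J(x', B)`: otherwise `x` would lie between a point `w ∈ B` and `x'`, while `x'` lies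
between `x` and a point `v ∈ B`, so `x` would lie on the segment `[w, v] ⊆ B`.
-/

noncomputable section

section ConvexJoin

variable {𝕜 E : Type*} [Field 𝕜] [LinearOrder 𝕜] [IsStrictOrderedRing 𝕜]
  [AddCommGroup E] [Module 𝕜 E] {t : Set E} {x x' : E}

theorem Convex.convexJoin_singleton_subset_of_mem (ht : Convex 𝕜 t)
    (hx' : x' ∈ convexJoin 𝕜 {x} t) : convexJoin 𝕜 {x'} t ⊆ convexJoin 𝕜 {x} t :=
  calc convexJoin 𝕜 {x'} t
      ⊆ convexJoin 𝕜 (convexJoin 𝕜 {x} t) t := convexJoin_mono_left (Set.singleton_subset_iff.2 hx')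
    _ = convexJoin 𝕜 {x} (convexJoin 𝕜 t t) := convexJoin_assoc _ _ _
    _ ⊆ convexJoin 𝕜 {x} t := convexJoin_mono_right (convexJoin_subset le_rfl le_rfl ht)

theorem Convex.notMem_convexJoin_singleton_of_mem (ht : Convex 𝕜 t) (hx : x ∉ t)
    (hx' : x' ∈ convexJoin 𝕜 {x} t) (hne : x' ≠ x) : x ∉ convexJoin 𝕜 {x'} t := by
  intro hx_mem
  rw [convexJoin_singleton_left, Set.mem_iUnion₂] at hx' hx_mem
  obtain ⟨v, hv, hx'v⟩ := hx'
  obtain ⟨w, hw, hxw⟩ := hx_mem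
  have hwxv : Wbtw 𝕜 w x v :=
    (mem_segment_iff_wbtw.1 hxw).symm.trans_expand_left (mem_segment_iff_wbtw.1 hx'v) hne.symm
  exact hx (ht.segment_subset hw hv hwxv.mem_segment)

end ConvexJoin

theorem cone_eq_convexJoin_diff (x y : EuclideanSpace ℝ (Fin 2)) (l : ℝ) :
    Cone x y l = convexJoin ℝ {x} (Metric.ball y l) \ {x} := by
  ext z
  simp [Cone, and_comm]

theorem cone_subset_cone_general (x y x' : EuclideanSpace ℝ (Fin 2)) (l : ℝ)
    (hd : l < dist x y)
    (hx' : x' ∈ Cone x y l) :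
    Cone x' y l ⊆ Cone x y l := by
  simp only [cone_eq_convexJoin_diff] at hx' ⊢
  rintro z ⟨hz, -⟩
  have hx_out : x ∉ Metric.ball y l := by simpa using hd.le
  refine ⟨(convex_ball y l).convexJoin_singleton_subset_of_mem hx'.1 hz, ?_⟩
  rintro rfl
  exact (convex_ball y l).notMem_convexJoin_singleton_of_mem hx_out hx'.1 hx'.2 hz

/-- If `x'` lies in `Cone(x, B(y,l))` but outside the closed disk of radius `l`
around `y`, then `Cone(x', B(y,l)) ⊆ Cone(x, B(y,l))`. -/
theorem cone_subset_cone (x y x' : EuclideanSpace ℝ (Fin 2)) (l : ℝ)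
    (hl : 0 < l) (hd : l < dist x y)
    (hx' : x' ∈ Cone x y l) (hfar : l < dist x' y) :
    Cone x' y l ⊆ Cone x y l :=
  cone_subset_cone_general x y x' l hd hx'
end
end

section
/- Let C₁ and C₂ be two circles passing through distinct points x and y, whose centers both lie in the same closed half-plane H delimited by the line through x and y, with the center of C₂ at distance from line(x,y) greater than or equal to the distance of the center of C₁. Then the intersection of the open disk bounded by C₁ with H is contained in the intersection of the open disk bounded by C₂ with H. -/
/-!
The power `‖p - c‖² - ‖x - c‖²` of a point `p` with respect to the circle of center `c` through
`x` is affine in `c`: moving the center from `c₁` to `c₂` changes it by `-2⟪p - x, c₂ - c₁⟫`.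
In the plane, a vector orthogonal to the line `ker f` is a multiple of the Riesz representative
of `f`; this applies both to `c₂ - c₁` (both centers lie on the perpendicular bisector of `xy`)
and to the perpendicular from a center to `line(x, y)`, which gives `infDist c line(x, y) =
|f c| / ‖f‖`. Hence `c₂ - c₁` is a nonnegative multiple of that representative, so
`⟪p - x, c₂ - c₁⟫ ≥ 0` for `p ∈ H`, and the power of `p` can only decrease.
-/

open Metric Module RealInnerProductSpace

variable {V : Type*} [NormedAddCommGroup V] [InnerProductSpace ℝ V]

lemma dist_sq_sub_dist_sq_eq (p x c₁ c₂ : V) :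
    dist p c₂ ^ 2 - dist x c₂ ^ 2 = dist p c₁ ^ 2 - dist x c₁ ^ 2 - 2 * ⟪p - x, c₂ - c₁⟫ := by
  simp only [dist_eq_norm, ← real_inner_self_eq_norm_sq, inner_sub_left, inner_sub_right,
    real_inner_comm]
  ring

lemma mem_ball_dist_of_inner_nonneg {p x c₁ c₂ : V} (hp : p ∈ ball c₁ (dist c₁ x))
    (h : 0 ≤ ⟪p - x, c₂ - c₁⟫) : p ∈ ball c₂ (dist c₂ x) := by
  rw [mem_ball, dist_comm c₁, ← pow_lt_pow_iff_left₀ dist_nonneg dist_nonneg two_ne_zero] at hp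
  rw [mem_ball, dist_comm c₂, ← pow_lt_pow_iff_left₀ dist_nonneg dist_nonneg two_ne_zero]
  linarith [dist_sq_sub_dist_sq_eq p x c₁ c₂]

section TwoDim

variable [Fact (finrank ℝ V = 2)] {f : V →L[ℝ] ℝ}

attribute [local instance] FiniteDimensional.of_fact_finrank_eq_two

lemma exists_smul_eq_of_inner_eq_zero {u w v : V} (hu : u ≠ 0) (hw : w ≠ 0)
    (hwu : ⟪w, u⟫ = 0) (hvu : ⟪v, u⟫ = 0) : ∃ t : ℝ, v = t • w := by
  have hrank : finrank ℝ (ℝ ∙ u)ᗮ = 1 := Submodule.finrank_orthogonal_span_singleton hu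
  have hw' : (⟨w, Submodule.mem_orthogonal_singleton_iff_inner_left.2 hwu⟩ : (ℝ ∙ u)ᗮ) ≠ 0 :=
    fun h ↦ hw (congrArg Subtype.val h)
  obtain ⟨t, ht⟩ := (finrank_eq_one_iff_of_nonzero' _ hw').1 hrank
    ⟨v, Submodule.mem_orthogonal_singleton_iff_inner_left.2 hvu⟩
  exact ⟨t, (congrArg Subtype.val ht).symm⟩

lemma inner_mul_norm_sq_eq_of_inner_eq_zero {u v : V} (hu : u ≠ 0) (hfu : f u = 0)
    (hvu : ⟪v, u⟫ = 0) (q : V) : ⟪q, v⟫ * ‖f‖ ^ 2 = f q * f v := by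
  set w := (InnerProductSpace.toDual ℝ V).symm f
  have hw : ∀ z, ⟪w, z⟫ = f z := fun z ↦ InnerProductSpace.toDual_symm_apply
  have hnorm : ‖w‖ = ‖f‖ := LinearIsometryEquiv.norm_map _ _
  rcases eq_or_ne w 0 with hw0 | hw0
  · simp [← hw, ← hnorm, hw0]
  obtain ⟨t, rfl⟩ := exists_smul_eq_of_inner_eq_zero hu hw0 (by rw [hw, hfu]) hvu
  rw [← hw, ← hw, ← hnorm, real_inner_smul_right, real_inner_smul_right,
    real_inner_self_eq_norm_sq, real_inner_comm]
  ring

lemma infDist_affineSpan_pair_mul_norm_eq_abs {x y : V} (hxy : x ≠ y) (hfx : f x = 0)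
    (hfy : f y = 0) (c : V) : infDist c (affineSpan ℝ {x, y}) * ‖f‖ = |f c| := by
  set L := affineSpan ℝ ({x, y} : Set V)
  have : Nonempty L := ⟨⟨x, mem_affineSpan ℝ (by simp)⟩⟩
  set P := EuclideanGeometry.orthogonalProjection L c
  have hdir : L.direction = ℝ ∙ (x - y) := by
    rw [direction_affineSpan, vectorSpan_pair, vsub_eq_sub]
  have hperp : ⟪c - P, x - y⟫ = 0 := by
    rw [← Submodule.mem_orthogonal_singleton_iff_inner_left, ← hdir]
    exact EuclideanGeometry.vsub_orthogonalProjection_mem_direction_orthogonal L c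
  have hL : L ≤ (LinearMap.ker (f : V →ₗ[ℝ] ℝ)).toAffineSubspace :=
    affineSpan_le.2 (by simp [Set.insert_subset_iff, hfx, hfy])
  have hfP : f P = 0 := Submodule.mem_toAffineSubspace.1 (hL P.2)
  have key := inner_mul_norm_sq_eq_of_inner_eq_zero (f := f) (sub_ne_zero.2 hxy)
    (by simp [hfx, hfy]) hperp (c - P)
  rw [real_inner_self_eq_norm_sq, map_sub, hfP, sub_zero] at key
  rw [← EuclideanGeometry.dist_orthogonalProjection_eq_infDist, dist_eq_norm,
    ← sq_eq_sq₀ (by positivity) (abs_nonneg _), mul_pow, key, sq_abs, sq]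

end TwoDim

/-- Let `C₁`, `C₂` be circles through distinct points `x`, `y` (so their centers
`c₁`, `c₂` are equidistant from `x` and `y`), whose centers both lie in the same
closed half-plane `H = {p | 0 ≤ f p}` delimited by the line through `x` and `y`
(here `f` is a nonzero linear functional vanishing on that line).  If the center
of `C₂` is at distance from `line(x,y)` at least that of the center of `C₁`,
then `encl(C₁) ∩ H ⊆ encl(C₂) ∩ H`. -/
theorem encl_inter_halfplane_subset
    (x y c₁ c₂ : EuclideanSpace ℝ (Fin 2)) (hxy : x ≠ y)
    (f : EuclideanSpace ℝ (Fin 2) →L[ℝ] ℝ) (hf : f ≠ 0)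
    (hfx : f x = 0) (hfy : f y = 0)
    (hb₁ : dist c₁ x = dist c₁ y) (hb₂ : dist c₂ x = dist c₂ y)
    (hc₁ : 0 ≤ f c₁) (hc₂ : 0 ≤ f c₂)
    (hd : Metric.infDist c₁ (affineSpan ℝ ({x, y} : Set (EuclideanSpace ℝ (Fin 2))) :
            Set (EuclideanSpace ℝ (Fin 2))) ≤
          Metric.infDist c₂ (affineSpan ℝ ({x, y} : Set (EuclideanSpace ℝ (Fin 2))) :
            Set (EuclideanSpace ℝ (Fin 2)))) :
    Metric.ball c₁ (dist c₁ x) ∩ {p | 0 ≤ f p} ⊆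
      Metric.ball c₂ (dist c₂ x) ∩ {p | 0 ≤ f p} := by
  have : Fact (finrank ℝ (EuclideanSpace ℝ (Fin 2)) = 2) := ⟨finrank_euclideanSpace_fin⟩
  have hfc : f c₁ ≤ f c₂ := by
    have := mul_le_mul_of_nonneg_right hd (norm_nonneg f)
    rwa [infDist_affineSpan_pair_mul_norm_eq_abs hxy hfx hfy,
      infDist_affineSpan_pair_mul_norm_eq_abs hxy hfx hfy, abs_of_nonneg hc₁,
      abs_of_nonneg hc₂] at this
  have hperp : ⟪c₂ - c₁, y - x⟫ = 0 :=
    EuclideanGeometry.inner_vsub_vsub_of_dist_eq_of_dist_eq (c₁ := c₁) (c₂ := c₂)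
      (by rwa [dist_comm x, dist_comm y]) (by rwa [dist_comm x, dist_comm y])
  rintro p ⟨hp, hfp⟩
  refine ⟨mem_ball_dist_of_inner_nonneg hp ?_, hfp⟩
  have key := inner_mul_norm_sq_eq_of_inner_eq_zero (f := f) (sub_ne_zero.2 hxy.symm)
    (by simp [hfx, hfy]) hperp (p - x)
  rw [map_sub, map_sub, hfx, sub_zero] at key
  exact nonneg_of_mul_nonneg_left (key ▸ mul_nonneg hfp (sub_nonneg.2 hfc))
    (pow_pos (norm_pos_iff.2 hf) 2)
end

section
/- Let C₁, C₂, C₃ be circles through two distinct points x and y, with centers c₁, c₂, c₃ respectively on the perpendicular bisector ℓ of segment xy, such that c₂ lies strictly between c₁ and c₃ on ℓ. Then encl(C₁) ∩ encl(C₃) ⊆ encl(C₂), and moreover (closure of encl(C₁)) ∩ (closure of encl(C₃)) minus {x,y} is contained in the open disk encl(C₂). -/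
open Metric

/-!
A point `p` lies inside the circle about `c` through `x` iff
`dist p c ^ 2 - dist x c ^ 2 = ‖p‖ ^ 2 - ‖x‖ ^ 2 - 2 ⟪p - x, c⟫` is negative, and this is an affine
function of the centre `c`. It is nonpositive at `c₁` and `c₃`, so negative at the interior point
`c₂` unless it vanishes at both ends, i.e. unless `p` lies on both circles `C₁` and `C₃`; two
distinct circles in the plane meet in at most two points, here `x` and `y`.
-/

section InnerProductSpace

variable {E : Type*} [NormedAddCommGroup E] [InnerProductSpace ℝ E]

theorem dist_sq_sub_dist_sq_smul_add_smul (p x c₁ c₃ : E) {a b : ℝ} (hab : a + b = 1) :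
    dist p (a • c₁ + b • c₃) ^ 2 - dist x (a • c₁ + b • c₃) ^ 2 =
      a * (dist p c₁ ^ 2 - dist x c₁ ^ 2) + b * (dist p c₃ ^ 2 - dist x c₃ ^ 2) := by
  simp only [dist_eq_norm, norm_sub_sq_real, inner_add_right, real_inner_smul_right]
  linear_combination (‖x‖ ^ 2 - ‖p‖ ^ 2) * hab

theorem dist_lt_dist_of_mem_openSegment {p x c₁ c₂ c₃ : E} (hc₂ : c₂ ∈ openSegment ℝ c₁ c₃)
    (h₁ : dist p c₁ ≤ dist x c₁) (h₃ : dist p c₃ ≤ dist x c₃)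
    (hlt : dist p c₁ < dist x c₁ ∨ dist p c₃ < dist x c₃) :
    dist p c₂ < dist x c₂ := by
  obtain ⟨a, b, ha, hb, hab, rfl⟩ := hc₂
  have key := dist_sq_sub_dist_sq_smul_add_smul p x c₁ c₃ hab
  have sq₁ : dist p c₁ ^ 2 ≤ dist x c₁ ^ 2 := by gcongr
  have sq₃ : dist p c₃ ^ 2 ≤ dist x c₃ ^ 2 := by gcongr
  have hsq : dist p (a • c₁ + b • c₃) ^ 2 < dist x (a • c₁ + b • c₃) ^ 2 := by
    rcases hlt with hlt | hlt
    · have : dist p c₁ ^ 2 < dist x c₁ ^ 2 := by gcongr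
      nlinarith
    · have : dist p c₃ ^ 2 < dist x c₃ ^ 2 := by gcongr
      nlinarith
  exact lt_of_pow_lt_pow_left₀ 2 dist_nonneg hsq

end InnerProductSpace

theorem encl_between_circles_general
    (x y c₁ c₂ c₃ : EuclideanSpace ℝ (Fin 2)) (hxy : x ≠ y)
    (h₁ : dist c₁ x = dist c₁ y)
    (h₃ : dist c₃ x = dist c₃ y)
    (h₁₃ : c₁ ≠ c₃)
    (hbet : c₂ ∈ openSegment ℝ c₁ c₃) :
    Metric.ball c₁ (dist c₁ x) ∩ Metric.ball c₃ (dist c₃ x) ⊆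
        Metric.ball c₂ (dist c₂ x) ∧
    (Metric.closedBall c₁ (dist c₁ x) ∩ Metric.closedBall c₃ (dist c₃ x)) \
        ({x, y} : Set (EuclideanSpace ℝ (Fin 2))) ⊆
      Metric.ball c₂ (dist c₂ x) := by
  rw [dist_comm c₁ x, dist_comm c₁ y] at h₁
  rw [dist_comm c₃ x, dist_comm c₃ y] at h₃
  simp only [Set.subset_def, Set.mem_inter_iff, Set.mem_sdiff, mem_ball, mem_closedBall,
    dist_comm c₁ x, dist_comm c₂ x, dist_comm c₃ x]
  refine ⟨fun p ⟨hp₁, hp₃⟩ ↦ dist_lt_dist_of_mem_openSegment hbet hp₁.le hp₃.le (.inl hp₁),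
    fun p ⟨⟨hp₁, hp₃⟩, hpxy⟩ ↦ dist_lt_dist_of_mem_openSegment hbet hp₁ hp₃ ?_⟩
  by_contra! hon
  exact hpxy (EuclideanGeometry.eq_of_dist_eq_of_dist_eq_of_finrank_eq_two
    finrank_euclideanSpace_fin h₁₃ hxy rfl h₁.symm (hp₁.antisymm hon.1) rfl h₃.symm
    (hp₃.antisymm hon.2))

/-- Let `C₁, C₂, C₃` be circles through two distinct points `x`, `y` (so their
centers `c₁, c₂, c₃` are equidistant from `x` and `y`, i.e. lie on the
perpendicular bisector of segment `xy`), with `c₂` strictly between `c₁` and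
`c₃`.  Then `encl(C₁) ∩ encl(C₃) ⊆ encl(C₂)`, and moreover
`(closure encl(C₁)) ∩ (closure encl(C₃)) \ {x,y} ⊆ encl(C₂)`. -/
theorem encl_between_circles
    (x y c₁ c₂ c₃ : EuclideanSpace ℝ (Fin 2)) (hxy : x ≠ y)
    (h₁ : dist c₁ x = dist c₁ y) (h₂ : dist c₂ x = dist c₂ y)
    (h₃ : dist c₃ x = dist c₃ y)
    (h₁₃ : c₁ ≠ c₃)
    (hbet : c₂ ∈ openSegment ℝ c₁ c₃) :
    Metric.ball c₁ (dist c₁ x) ∩ Metric.ball c₃ (dist c₃ x) ⊆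
        Metric.ball c₂ (dist c₂ x) ∧
    (Metric.closedBall c₁ (dist c₁ x) ∩ Metric.closedBall c₃ (dist c₃ x)) \
        ({x, y} : Set (EuclideanSpace ℝ (Fin 2))) ⊆
      Metric.ball c₂ (dist c₂ x) :=
  encl_between_circles_general x y c₁ c₂ c₃ hxy h₁ h₃ h₁₃ hbet
end

section
/- For any finite set P of at least two points in the plane, there exists a subset P' ⊆ P which either consists of two points whose diametral circle has all of P in its closed disk, or consists of three points forming an acute (or right) angled triangle whose circumcircle equals the minimum enclosing circle of P; in either case CC(P') = C(P). -/
/-!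
The farthest-point distance `c ↦ max_{p ∈ P} dist p c` is continuous and tends to infinity, so it
attains a minimum `ρ` at some `c`. The minimizer is unique because the norm is strictly convex: two
different minimizing centers would make their midpoint strictly better. If `c` were outside the
convex hull of the points of `P` at distance `ρ`, moving `c` slightly towards a separating direction
would bring all of `P` strictly inside the circle, so `c` lies in that hull. By Carathéodory, `c` is
then a positive convex combination of two or three such points: with two, `c` is their midpoint;
with three, `c` lies inside the triangle, which makes each of its angles at most `π / 2`.
-/

open Metric EuclideanGeometry Real

/-- `IsMEC c ρ P` : the circle with center `c` and radius `ρ` is the minimum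
enclosing circle of `P`: its closed disk contains `P`, any circle whose closed
disk contains `P` has radius at least `ρ`, and it is the unique such circle of
radius `ρ`. -/
def IsMEC (c : EuclideanSpace ℝ (Fin 2)) (ρ : ℝ)
    (P : Set (EuclideanSpace ℝ (Fin 2))) : Prop :=
  P ⊆ Metric.closedBall c ρ ∧
    ∀ c' ρ', P ⊆ Metric.closedBall c' ρ' → ρ ≤ ρ' ∧ (ρ' = ρ → c' = c)

open Filter Topology RealInnerProductSpace

section PseudoMetricSpace

variable {X : Type*} [PseudoMetricSpace X]

theorem Set.Finite.exists_lt_subset_closedBall {P : Set X} (hP : P.Finite) {c : X} {ρ : ℝ}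
    (h : ∀ p ∈ P, dist p c < ρ) : ∃ ρ' < ρ, P ⊆ closedBall c ρ' := by
  have hev : ∀ᶠ ρ' in 𝓝[<] ρ, ∀ p ∈ P, dist p c < ρ' :=
    hP.eventually_all.2 fun p hp => eventually_of_mem (Ioo_mem_nhdsLT (h p hp)) fun _ h => h.1
  obtain ⟨ρ', hρ', hlt⟩ := (hev.and self_mem_nhdsWithin).exists
  exact ⟨ρ', hlt, fun p hp => (hρ' p hp).le⟩

theorem Set.Finite.exists_minimal_enclosing_closedBall [ProperSpace X] {P : Set X}
    (hP : P.Finite) (hne : P.Nonempty) :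
    ∃ c ρ, P ⊆ closedBall c ρ ∧ ∀ c' ρ', P ⊆ closedBall c' ρ' → ρ ≤ ρ' := by
  obtain ⟨p₀, hp₀⟩ := hne
  have : Nonempty X := ⟨p₀⟩
  have hne' : hP.toFinset.Nonempty := ⟨p₀, hP.mem_toFinset.2 hp₀⟩
  set f : X → ℝ := fun c => hP.toFinset.sup' hne' (dist · c)
  have hf : ∀ c ρ, P ⊆ closedBall c ρ ↔ f c ≤ ρ := by
    simp [f, Finset.sup'_le_iff, Set.subset_def]
  have hcont : Continuous f :=
    Continuous.finset_sup'_apply hne' fun p _ => continuous_const.dist continuous_id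
  have hcoercive : Tendsto f (cocompact X) atTop :=
    tendsto_atTop_mono (fun c => Finset.le_sup' (dist · c) (hP.mem_toFinset.2 hp₀))
      (tendsto_dist_left_cocompact_atTop p₀)
  obtain ⟨c, hc⟩ := hcont.exists_forall_le hcoercive
  exact ⟨c, f c, (hf c _).2 le_rfl, fun c' ρ' h => (hc c').trans ((hf c' ρ').1 h)⟩

end PseudoMetricSpace

section NormedSpace

variable {E : Type*} [NormedAddCommGroup E] [NormedSpace ℝ E]

theorem eventually_dist_add_smul_lt_of_dist_lt {p c : E} {ρ : ℝ} (h : dist p c < ρ) (v : E) :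
    ∀ᶠ ε in 𝓝 (0 : ℝ), dist p (c + ε • v) < ρ := by
  have hcont : Continuous fun ε : ℝ => dist p (c + ε • v) := by fun_prop
  exact hcont.continuousAt.eventually_lt continuousAt_const (by simpa using h)

variable [StrictConvexSpace ℝ E]

theorem Set.Finite.eq_of_minimal_enclosing_closedBall {P : Set E} (hP : P.Finite) {c c' : E}
    {ρ : ℝ} (hc : P ⊆ closedBall c ρ) (hc' : P ⊆ closedBall c' ρ)
    (hmin : ∀ c'' ρ', P ⊆ closedBall c'' ρ' → ρ ≤ ρ') : c' = c := by
  by_contra hne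
  obtain ⟨ρ', hρ', hsub⟩ := hP.exists_lt_subset_closedBall (c := midpoint ℝ c c') fun p hp => by
    have := combo_mem_ball_of_ne (mem_closedBall_comm.1 (hc hp)) (mem_closedBall_comm.1 (hc' hp))
      (Ne.symm hne) one_half_pos one_half_pos (add_halves 1)
    rwa [midpoint_eq_smul_add, invOf_eq_inv, ← one_div, smul_add, ← mem_ball']
  exact (hmin _ _ hsub).not_gt hρ'

theorem eq_midpoint_of_mem_segment_of_dist_eq {a b c : E} (hc : c ∈ segment ℝ a b)
    (h : dist a c = dist b c) : c = midpoint ℝ a b := by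
  have hsum := dist_add_dist_of_mem_segment hc
  exact eq_midpoint_of_dist_eq_half (by linarith [dist_comm c b]) (by linarith [dist_comm c b])

end NormedSpace

section InnerProductSpace

variable {E : Type*} [NormedAddCommGroup E] [InnerProductSpace ℝ E]

theorem eventually_dist_add_smul_lt_of_dist_eq {p c v : E} {ρ : ℝ} (h : dist p c = ρ)
    (hv : 0 < ⟪v, p - c⟫) : ∀ᶠ ε in 𝓝[>] (0 : ℝ), dist p (c + ε • v) < ρ := by
  have hsmall : ∀ᶠ ε in 𝓝 (0 : ℝ), ε * ‖v‖ ^ 2 < 2 * ⟪v, p - c⟫ := by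
    have hcont : Continuous fun ε : ℝ => ε * ‖v‖ ^ 2 := by fun_prop
    exact hcont.continuousAt.eventually_lt continuousAt_const (by simpa using hv)
  filter_upwards [nhdsWithin_le_nhds hsmall, self_mem_nhdsWithin] with ε hε (hε₀ : 0 < ε)
  have hsq : dist p (c + ε • v) ^ 2 = ρ ^ 2 - ε * (2 * ⟪v, p - c⟫ - ε * ‖v‖ ^ 2) := by
    rw [← h, dist_eq_norm, dist_eq_norm, show p - (c + ε • v) = (p - c) - ε • v by abel,
      norm_sub_sq_real, real_inner_smul_right, norm_smul, real_inner_comm, Real.norm_eq_abs,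
      abs_of_pos hε₀]
    ring
  refine lt_of_pow_lt_pow_left₀ 2 (h ▸ dist_nonneg) ?_
  rw [hsq]
  nlinarith

theorem Set.Finite.mem_convexHull_of_minimal_enclosing_closedBall [CompleteSpace E] {P : Set E}
    (hP : P.Finite) {c : E} {ρ : ℝ} (hc : P ⊆ closedBall c ρ)
    (hmin : ∀ c' ρ', P ⊆ closedBall c' ρ' → ρ ≤ ρ') :
    c ∈ convexHull ℝ {p ∈ P | dist p c = ρ} := by
  by_contra hnot
  have hS : {p ∈ P | dist p c = ρ}.Finite := hP.subset fun p hp => hp.1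
  obtain ⟨φ, u, hφc, hφS⟩ := geometric_hahn_banach_point_closed (convex_convexHull ℝ _)
    (hS.isCompact_convexHull (𝕜 := ℝ)).isClosed hnot
  set v := (InnerProductSpace.toDual ℝ E).symm φ
  have hfar : ∀ p ∈ P, dist p c = ρ → 0 < ⟪v, p - c⟫ := fun p hp hpc => by
    rw [inner_sub_right, InnerProductSpace.toDual_symm_apply, InnerProductSpace.toDual_symm_apply]
    linarith [hφS p (subset_convexHull ℝ _ ⟨hp, hpc⟩)]
  have hev : ∀ᶠ ε in 𝓝[>] (0 : ℝ), ∀ p ∈ P, dist p (c + ε • v) < ρ :=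
    hP.eventually_all.2 fun p hp => by
      rcases (mem_closedBall.1 (hc hp)).lt_or_eq with hlt | heq
      · exact nhdsWithin_le_nhds (eventually_dist_add_smul_lt_of_dist_lt hlt v)
      · exact eventually_dist_add_smul_lt_of_dist_eq heq (hfar p hp heq)
  obtain ⟨ε, hε⟩ := hev.exists
  obtain ⟨ρ', hρ', hsub⟩ := hP.exists_lt_subset_closedBall hε
  exact (hmin _ _ hsub).not_gt hρ'

theorem inner_sub_sub_nonneg_of_smul_add_eq_zero {a b d : E} {α β γ : ℝ} (hα : 0 < α)
    (hβ : 0 ≤ β) (hγ : 0 ≤ γ) (hb : ‖b‖ = ‖a‖) (hd : ‖d‖ = ‖a‖)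
    (h : α • a + β • b + γ • d = 0) : 0 ≤ ⟪b - a, d - a⟫ := by
  have hpair : ⟪α • a + β • b + γ • d, b + d⟫ = 0 := by rw [h, inner_zero_left]
  have hbd : -(‖a‖ ^ 2) ≤ ⟪b, d⟫ := by
    have := abs_real_inner_le_norm b d
    rw [hb, hd, ← sq] at this
    linarith [neg_abs_le ⟪b, d⟫]
  have hkey : α * ⟪b - a, d - a⟫ = (α + β + γ) * (‖a‖ ^ 2 + ⟪b, d⟫) := by
    simp only [inner_add_left, inner_add_right, inner_sub_left, inner_sub_right,
      real_inner_smul_left, real_inner_self_eq_norm_sq, hb, hd, real_inner_comm a b,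
      real_inner_comm b d] at hpair ⊢
    linear_combination -hpair
  have : 0 ≤ α * ⟪b - a, d - a⟫ := hkey ▸ mul_nonneg (by linarith) (by linarith)
  exact (mul_nonneg_iff_of_pos_left hα).1 this

theorem angle_le_pi_div_two_of_convex_combination_of_dist_eq {c p₁ p₂ p₃ : E} {α β γ : ℝ}
    (hα : 0 < α) (hβ : 0 ≤ β) (hγ : 0 ≤ γ) (hsum : α + β + γ = 1)
    (hc : α • p₁ + β • p₂ + γ • p₃ = c) (h₂ : dist p₂ c = dist p₁ c)
    (h₃ : dist p₃ c = dist p₁ c) : ∠ p₂ p₁ p₃ ≤ π / 2 := by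
  have hzero : α • (p₁ - c) + β • (p₂ - c) + γ • (p₃ - c) = 0 := by
    linear_combination (norm := module) hc - hsum • c
  have hinner := inner_sub_sub_nonneg_of_smul_add_eq_zero hα hβ hγ
    (by rwa [← dist_eq_norm, ← dist_eq_norm]) (by rwa [← dist_eq_norm, ← dist_eq_norm]) hzero
  rw [sub_sub_sub_cancel_right, sub_sub_sub_cancel_right] at hinner
  rw [EuclideanGeometry.angle, InnerProductGeometry.angle, Real.arccos_le_pi_div_two]
  exact div_nonneg hinner (by positivity)

theorem angles_le_pi_div_two_of_fin_three_of_dist_eq {c : E} {ρ : ℝ} {z : Fin 3 → E}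
    {w : Fin 3 → ℝ} (hw : ∀ i, 0 < w i) (hw₁ : ∑ i, w i = 1) (hwz : ∑ i, w i • z i = c)
    (hz : ∀ i, dist (z i) c = ρ) :
    ∠ (z 1) (z 0) (z 2) ≤ π / 2 ∧ ∠ (z 0) (z 1) (z 2) ≤ π / 2 ∧ ∠ (z 0) (z 2) (z 1) ≤ π / 2 := by
  simp only [Fin.sum_univ_three] at hw₁ hwz
  have hdist i j : dist (z i) c = dist (z j) c := (hz i).trans (hz j).symm
  refine ⟨?_, ?_, ?_⟩
  · exact angle_le_pi_div_two_of_convex_combination_of_dist_eq (hw 0) (hw 1).le (hw 2).le hw₁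
      hwz (hdist 1 0) (hdist 2 0)
  · exact angle_le_pi_div_two_of_convex_combination_of_dist_eq (hw 1) (hw 0).le (hw 2).le
      (by linarith) (by rw [← hwz]; abel) (hdist 0 1) (hdist 2 1)
  · exact angle_le_pi_div_two_of_convex_combination_of_dist_eq (hw 2) (hw 0).le (hw 1).le
      (by linarith) (by rw [← hwz]; abel) (hdist 0 2) (hdist 1 2)

end InnerProductSpace

theorem eq_pos_convex_span_fin_of_mem_convexHull {𝕜 E : Type*} [Field 𝕜] [LinearOrder 𝕜]
    [IsStrictOrderedRing 𝕜] [AddCommGroup E] [Module 𝕜 E] [FiniteDimensional 𝕜 E] {S : Set E}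
    {x : E} (hx : x ∈ convexHull 𝕜 S) :
    ∃ n ≤ Module.finrank 𝕜 E + 1, ∃ (z : Fin n → E) (w : Fin n → 𝕜), Set.range z ⊆ S ∧
      Function.Injective z ∧ (∀ i, 0 < w i) ∧ ∑ i, w i = 1 ∧ ∑ i, w i • z i = x := by
  obtain ⟨ι, _, z, w, hzS, hz, hw, hw₁, hwz⟩ := eq_pos_convex_span_of_mem_convexHull hx
  have hcard : Fintype.card ι ≤ Module.finrank 𝕜 E + 1 :=
    hz.card_le_finrank_succ.trans (Nat.succ_le_succ (Submodule.finrank_le _))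
  let e := (Fintype.equivFin ι).symm
  refine ⟨_, hcard, z ∘ e, w ∘ e, ?_, hz.injective.comp e.injective, fun i => hw (e i), ?_, ?_⟩
  · exact (Set.range_comp_subset_range e z).trans hzS
  · rwa [← e.sum_comp] at hw₁
  · rwa [← e.sum_comp] at hwz

/-- For any finite set `P` of at least two points of the plane, there is a
subset `P' ⊆ P` consisting either of two points whose diametral circle is the
minimum enclosing circle of `P`, or of three points forming an acute (or right)
angled triangle whose circumcircle is the minimum enclosing circle of `P`. -/
theorem exists_MEC_determining_subset
    (P : Set (EuclideanSpace ℝ (Fin 2))) (hP : P.Finite) (h2 : 2 ≤ P.ncard) :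
    ∃ (c : EuclideanSpace ℝ (Fin 2)) (ρ : ℝ), IsMEC c ρ P ∧
      ((∃ p₁ ∈ P, ∃ p₂ ∈ P, p₁ ≠ p₂ ∧
          c = midpoint ℝ p₁ p₂ ∧ ρ = dist p₁ p₂ / 2) ∨
       (∃ p₁ ∈ P, ∃ p₂ ∈ P, ∃ p₃ ∈ P, p₁ ≠ p₂ ∧ p₂ ≠ p₃ ∧ p₁ ≠ p₃ ∧
          dist c p₁ = ρ ∧ dist c p₂ = ρ ∧ dist c p₃ = ρ ∧
          EuclideanGeometry.angle p₂ p₁ p₃ ≤ π / 2 ∧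
          EuclideanGeometry.angle p₁ p₂ p₃ ≤ π / 2 ∧
          EuclideanGeometry.angle p₁ p₃ p₂ ≤ π / 2)) := by
  obtain ⟨q₁, hq₁, q₂, hq₂, hq⟩ := (Set.one_lt_ncard hP).1 h2
  obtain ⟨c, ρ, hc, hmin⟩ := hP.exists_minimal_enclosing_closedBall ⟨q₁, hq₁⟩
  have hmec : IsMEC c ρ P := ⟨hc, fun c' ρ' h =>
    ⟨hmin c' ρ' h, fun hρ => hP.eq_of_minimal_enclosing_closedBall hc (hρ ▸ h) hmin⟩⟩
  have hρ : 0 < ρ := by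
    linarith [dist_pos.2 hq, dist_triangle_right q₁ q₂ c, mem_closedBall.1 (hc hq₁),
      mem_closedBall.1 (hc hq₂)]
  obtain ⟨n, hn, z, w, hzS, hz, hw, hw₁, hwz⟩ := eq_pos_convex_span_fin_of_mem_convexHull
    (hP.mem_convexHull_of_minimal_enclosing_closedBall hc hmin)
  rw [finrank_euclideanSpace_fin] at hn
  have hzP i : z i ∈ P := (hzS ⟨i, rfl⟩).1
  have hzc i : dist (z i) c = ρ := (hzS ⟨i, rfl⟩).2
  refine ⟨c, ρ, hmec, ?_⟩
  interval_cases n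
  · simp at hw₁
  · simp only [Finset.univ_unique, Fin.default_eq_zero, Finset.sum_singleton] at hw₁ hwz
    rw [hw₁, one_smul] at hwz
    simpa [hwz, hρ.ne] using hzc 0
  · left
    have hmid : c = midpoint ℝ (z 0) (z 1) := by
      refine eq_midpoint_of_mem_segment_of_dist_eq ⟨w 0, w 1, (hw 0).le, (hw 1).le, ?_, ?_⟩
        ((hzc 0).trans (hzc 1).symm)
      · simpa [Fin.sum_univ_two] using hw₁
      · simpa [Fin.sum_univ_two] using hwz
    refine ⟨z 0, hzP 0, z 1, hzP 1, hz.ne (by decide), hmid, ?_⟩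
    rw [← hzc 0, hmid, dist_left_midpoint]
    simp [div_eq_inv_mul]
  · right
    obtain ⟨h₁, h₂, h₃⟩ := angles_le_pi_div_two_of_fin_three_of_dist_eq hw hw₁ hwz hzc
    exact ⟨z 0, hzP 0, z 1, hzP 1, z 2, hzP 2, hz.ne (by decide), hz.ne (by decide),
      hz.ne (by decide), by rw [dist_comm, hzc], by rw [dist_comm, hzc], by rw [dist_comm, hzc],
      h₁, h₂, h₃⟩
end

section
/- Removing from a finite set P any point lying strictly inside its minimum enclosing circle does not change the minimum enclosing circle: if p ∈ P is in the open disk bounded by C(P), then C(P \ {p}) = C(P). -/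
noncomputable section

open Metric

/-- Removing from a finite set `P` any point lying strictly inside its minimum
enclosing circle does not change the minimum enclosing circle. -/
theorem MEC_diff_of_mem_ball
    (P : Set (EuclideanSpace ℝ (Fin 2))) (hP : P.Finite)
    (c : EuclideanSpace ℝ (Fin 2)) (ρ : ℝ) (hmec : IsMEC c ρ P)
    (p : EuclideanSpace ℝ (Fin 2)) (hp : p ∈ P) (hin : p ∈ Metric.ball c ρ) :
    IsMEC c ρ (P \ {p}) := by
  obtain ⟨hsub, hmin⟩ := hmec
  have hpc : dist p c < ρ := mem_ball.mp hin
  have key : ∀ c' ρ', (P \ {p}) ⊆ Metric.closedBall c' ρ' → ρ' ≤ ρ →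
      ρ' = ρ ∧ c' = c := by
    intro c' ρ' hball hle
    set ε : ℝ := ρ - dist p c with hεdef
    have hε : 0 < ε := by simp [hεdef]; linarith
    set M : ℝ := dist c c' + (ρ - ρ') with hMdef
    have hM0 : 0 ≤ M := by have := dist_nonneg (x := c) (y := c'); simp [hMdef]; linarith
    set s : ℝ := min 1 (ε / (2 * (M + 1))) with hs
    have hs0 : 0 < s := lt_min one_pos (by positivity)
    have hs1 : s ≤ 1 := min_le_left _ _
    have hsle : s ≤ ε / (2 * (M + 1)) := min_le_right _ _
    have hsM : s * M ≤ ε / 2 := by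
      have h1 : s * M ≤ (ε / (2 * (M + 1))) * M :=
        mul_le_mul_of_nonneg_right hsle hM0
      have h2 : (ε / (2 * (M + 1))) * M ≤ ε / 2 := by
        rw [div_mul_eq_mul_div, div_le_div_iff₀ (by positivity) (by norm_num)]
        nlinarith
      linarith
    set ct : EuclideanSpace ℝ (Fin 2) := s • c' + (1 - s) • c with hct
    set ρt : ℝ := s * ρ' + (1 - s) * ρ with hρt
    have hcover : P ⊆ Metric.closedBall ct ρt := by
      intro q hq
      rw [mem_closedBall, dist_eq_norm]
      have hq' : q - ct = s • (q - c') + (1 - s) • (q - c) := by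
        simp only [hct]; module
      by_cases hqp : q = p
      · subst hqp
        have h1 : ‖q - ct‖ ≤ ‖q - c‖ + s * ‖c - c'‖ := by
          have : q - ct = (q - c) + s • (c - c') := by simp only [hct]; module
          rw [this]
          calc ‖(q - c) + s • (c - c')‖ ≤ ‖q - c‖ + ‖s • (c - c')‖ := norm_add_le _ _
            _ = ‖q - c‖ + s * ‖c - c'‖ := by
                rw [norm_smul, Real.norm_eq_abs, abs_of_pos hs0]
        have hd1 : ‖q - c‖ = dist q c := (dist_eq_norm _ _).symm
        have hd2 : ‖c - c'‖ = dist c c' := (dist_eq_norm _ _).symm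
        have hsd : s * dist c c' ≤ s * M := by
          apply mul_le_mul_of_nonneg_left _ hs0.le
          simp [hMdef]; linarith
        -- need : ‖q - ct‖ ≤ ρt = ρ - s * (ρ - ρ')
        have hρteq : ρt = ρ - s * (ρ - ρ') := by ring
        rw [hρteq]
        have : s * (ρ - ρ') ≤ s * M := by
          apply mul_le_mul_of_nonneg_left _ hs0.le
          have := dist_nonneg (x := c) (y := c'); simp [hMdef]
        rw [hd1, hd2] at h1
        have : dist q c + s * dist c c' + s * (ρ - ρ') ≤ ρ := by
          nlinarith
        linarith
      · have h1 : dist q c' ≤ ρ' := hball ⟨hq, hqp⟩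
        have h2 : dist q c ≤ ρ := hsub hq
        rw [hq']
        calc ‖s • (q - c') + (1 - s) • (q - c)‖
            ≤ ‖s • (q - c')‖ + ‖(1 - s) • (q - c)‖ := norm_add_le _ _
          _ = s * ‖q - c'‖ + (1 - s) * ‖q - c‖ := by
              rw [norm_smul, norm_smul, Real.norm_eq_abs, Real.norm_eq_abs,
                abs_of_pos hs0, abs_of_nonneg (by linarith)]
          _ ≤ s * ρ' + (1 - s) * ρ := by
              have e1 : ‖q - c'‖ = dist q c' := (dist_eq_norm _ _).symm
              have e2 : ‖q - c‖ = dist q c := (dist_eq_norm _ _).symm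
              rw [e1, e2]
              have := mul_le_mul_of_nonneg_left h1 hs0.le
              have := mul_le_mul_of_nonneg_left h2 (by linarith : (0:ℝ) ≤ 1 - s)
              linarith
    obtain ⟨hρle, huniq⟩ := hmin ct ρt hcover
    have hρtle : ρt ≤ ρ := by
      have : s * ρ' ≤ s * ρ := mul_le_mul_of_nonneg_left hle hs0.le
      simp only [hρt]; nlinarith
    have heq : ρt = ρ := le_antisymm hρtle hρle
    have hρ' : ρ' = ρ := by
      simp only [hρt] at heq; nlinarith
    refine ⟨hρ', ?_⟩
    have hcteq : ct = c := huniq heq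
    have hz : s • (c' - c) = (0 : EuclideanSpace ℝ (Fin 2)) := by
      have h : s • c' + (1 - s) • c = c := hcteq
      have : s • (c' - c) = (s • c' + (1 - s) • c) - c := by module
      rw [this, h, sub_self]
    rcases smul_eq_zero.mp hz with h | h
    · exact absurd h hs0.ne'
    · exact sub_eq_zero.mp h
  refine ⟨fun q hq => hsub hq.1, fun c' ρ' hball => ?_⟩
  have hle : ρ ≤ ρ' := by
    by_contra h
    push_neg at h
    obtain ⟨h1, _⟩ := key c' ρ' hball h.le
    linarith
  exact ⟨hle, fun h => (key c' ρ' hball h.le).2⟩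
end
end

section
/- Let x, y, c be points with d(x,y) > 0, and suppose the open ball B(y, ε) satisfies: every point of B(y,ε) is strictly closer to y than to a third point t', given that d(y, t') > 2ε and d(x,y) ≤ d(x,t'). Then every point z in Cone(x, B(y,ε)) satisfies d(z,y) < d(z,t'). In other words, moving within the cone toward B(y,ε) preserves y being the closest of the two targets. -/
/-! `d(z,t')² - d(z,y)²` is affine in `z`, so `y` is strictly closer than `t'` on an open
half-plane. The ball `B(y,ε)` lies in it by the triangle inequality and `x` lies in its closure,
so every point of a segment from `x` into the ball, other than `x`, lies in the open half-plane. -/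

noncomputable section

open Metric

theorem dist_lt_dist_of_two_mul_lt {α : Type*} [PseudoMetricSpace α] {w y t : α} {ε : ℝ}
    (hw : dist w y < ε) (hsep : 2 * ε < dist y t) : dist w y < dist w t := by
  linarith [dist_triangle y w t, dist_comm y w]

section InnerProductSpace

variable {E : Type*} [NormedAddCommGroup E] [InnerProductSpace ℝ E]

open scoped RealInnerProductSpace

theorem sq_dist_sub_sq_dist (z y t : E) :
    dist z t ^ 2 - dist z y ^ 2 = 2 * ⟪z, y - t⟫ + (‖t‖ ^ 2 - ‖y‖ ^ 2) := by
  rw [dist_eq_norm, dist_eq_norm, norm_sub_sq_real, norm_sub_sq_real, inner_sub_right]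
  ring

theorem sq_dist_sub_sq_dist_add_smul (x w y t : E) {a b : ℝ} (hab : a + b = 1) :
    dist (a • x + b • w) t ^ 2 - dist (a • x + b • w) y ^ 2 =
      a * (dist x t ^ 2 - dist x y ^ 2) + b * (dist w t ^ 2 - dist w y ^ 2) := by
  simp only [sq_dist_sub_sq_dist, inner_add_left, real_inner_smul_left]
  linear_combination (‖y‖ ^ 2 - ‖t‖ ^ 2) * hab

theorem dist_lt_dist_of_mem_segment {x w y t z : E} (hx : dist x y ≤ dist x t)
    (hw : dist w y < dist w t) (hz : z ∈ segment ℝ x w) (hzx : z ≠ x) :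
    dist z y < dist z t := by
  obtain ⟨a, b, ha, hb, hab, rfl⟩ := hz
  have hb_pos : 0 < b := by
    refine hb.lt_of_ne fun hb0 => hzx ?_
    rw [← hb0, zero_smul, add_zero, show a = 1 by linarith, one_smul]
  have hx' : 0 ≤ dist x t ^ 2 - dist x y ^ 2 := sub_nonneg.2 (pow_le_pow_left₀ dist_nonneg hx 2)
  have hw' : 0 < dist w t ^ 2 - dist w y ^ 2 :=
    sub_pos.2 (pow_lt_pow_left₀ hw dist_nonneg two_ne_zero)
  have hz : 0 < dist (a • x + b • w) t ^ 2 - dist (a • x + b • w) y ^ 2 := by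
    rw [sq_dist_sub_sq_dist_add_smul x w y t hab]
    positivity
  exact lt_of_pow_lt_pow_left₀ 2 dist_nonneg (sub_pos.1 hz)

end InnerProductSpace

theorem cone_preserves_closest_target_general
    (x y t' : EuclideanSpace ℝ (Fin 2)) (ε : ℝ)
    (hsep : 2 * ε < dist y t')
    (hx : dist x y ≤ dist x t') :
    ∀ z ∈ Cone x y ε, dist z y < dist z t' := by
  rintro z ⟨hzx, w, hw, hz⟩
  exact dist_lt_dist_of_mem_segment hx (dist_lt_dist_of_two_mul_lt hw hsep) hz hzx

/-- Let `y` and `t'` be two targets with `d(y,t') > 2ε`, and let `x` be a point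
with `d(x,y) > 0` and `d(x,y) ≤ d(x,t')`.  Then every point `z` of
`Cone(x, B(y,ε))` satisfies `d(z,y) < d(z,t')`: moving within the cone toward
`B(y,ε)` preserves `y` being the closest of the two targets. -/
theorem cone_preserves_closest_target
    (x y t' : EuclideanSpace ℝ (Fin 2)) (ε : ℝ) (hε : 0 < ε)
    (hxy : 0 < dist x y)
    (hsep : 2 * ε < dist y t')
    (hx : dist x y ≤ dist x t') :
    ∀ z ∈ Cone x y ε, dist z y < dist z t' :=
  cone_preserves_closest_target_general x y t' ε hsep hx
end
end
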